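/- Let f = (f₁,f₂) : ℝ² → ℝ² be smooth with rank(df)ₓ ≥ 1 at every point x. Then the map df : ℝ² → M₂(ℝ), x ↦ Jacobian of f at x, is transverse to the submanifold S₁ of rank-one matrices if and only if 0 is a regular value of the function x ↦ det(df)ₓ. -/

import Mathlib

/-!
At a point `x`, transversality compares `A = d(df)ₓ` with the kernel of `φ = d(det)` at `df(x)`,
and the chain rule identifies `d(det ∘ df)ₓ` with `φ ∘ A`. As soon as `φ ≠ 0`, the sum
`range A + ker φ` is everything exactly when `range A ⊄ ker φ`, i.e. when `φ ∘ A ≠ 0`.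
Finally, the differential of the `2 × 2` determinant vanishes only at the zero matrix, which the
rank hypothesis excludes.
-/

open ContinuousLinearMap

theorem LinearMap.range_sup_ker_eq_top_iff_comp_ne_zero {K V W : Type*} [Field K]
    [AddCommGroup V] [Module K V] [AddCommGroup W] [Module K W]
    (A : V →ₗ[K] W) {φ : W →ₗ[K] K} (hφ : φ ≠ 0) :
    LinearMap.range A ⊔ LinearMap.ker φ = ⊤ ↔ φ ∘ₗ A ≠ 0 := by
  constructor
  · intro h hφA
    rw [sup_eq_right.2 (LinearMap.range_le_ker_iff.2 hφA), LinearMap.ker_eq_top] at h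
    exact hφ h
  · intro hφA
    obtain ⟨v, hv⟩ : ∃ v, φ (A v) ≠ 0 := by
      by_contra! h
      exact hφA (LinearMap.ext h)
    refine top_unique ((LinearMap.span_singleton_sup_ker_eq_top φ hv).ge.trans ?_)
    exact sup_le_sup_right
      ((Submodule.span_singleton_le_iff_mem _ _).2 (LinearMap.mem_range_self A v)) _

section DetFinTwo

variable {𝕜 : Type*} [NontriviallyNormedField 𝕜]

def matrixEntry (i j : Fin 2) : (Fin 2 → Fin 2 → 𝕜) →L[𝕜] 𝕜 :=
  (proj j).comp (proj (R := 𝕜) (φ := fun _ : Fin 2 => Fin 2 → 𝕜) i)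

@[simp]
theorem matrixEntry_apply (i j : Fin 2) (M : Fin 2 → Fin 2 → 𝕜) :
    matrixEntry i j M = M i j :=
  rfl

def detFinTwoDeriv (A : Fin 2 → Fin 2 → 𝕜) : (Fin 2 → Fin 2 → 𝕜) →L[𝕜] 𝕜 :=
  (A 0 0 • matrixEntry 1 1 + A 1 1 • matrixEntry 0 0)
    - (A 0 1 • matrixEntry 1 0 + A 1 0 • matrixEntry 0 1)

theorem detFinTwoDeriv_apply (A H : Fin 2 → Fin 2 → 𝕜) :
    detFinTwoDeriv A H = (A 0 0 * H 1 1 + A 1 1 * H 0 0) - (A 0 1 * H 1 0 + A 1 0 * H 0 1) := by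
  simp [detFinTwoDeriv]

theorem hasFDerivAt_det_fin_two (A : Fin 2 → Fin 2 → 𝕜) :
    HasFDerivAt (fun M : Fin 2 → Fin 2 → 𝕜 => (Matrix.of M).det) (detFinTwoDeriv A) A := by
  simp only [Matrix.det_fin_two, Matrix.of_apply]
  exact (((matrixEntry 0 0).hasFDerivAt (x := A)).mul (matrixEntry 1 1).hasFDerivAt).sub
    (((matrixEntry 0 1).hasFDerivAt (x := A)).mul (matrixEntry 1 0).hasFDerivAt)

theorem detFinTwoDeriv_ne_zero {A : Fin 2 → Fin 2 → 𝕜} (hA : A ≠ 0) :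
    detFinTwoDeriv A ≠ 0 := by
  contrapose! hA
  have entry (i j : Fin 2) : detFinTwoDeriv A (Pi.single i (Pi.single j 1)) = 0 := by
    rw [hA]; rfl
  funext i j
  have h00 := entry 1 1
  have h11 := entry 0 0
  have h01 := entry 1 0
  have h10 := entry 0 1
  simp [detFinTwoDeriv_apply] at h00 h11 h01 h10
  fin_cases i <;> fin_cases j <;> simpa

end DetFinTwo

/-- For a smooth `f : ℝ² → ℝ²` with `rank(df) ≥ 1` everywhere, the Jacobian map
`df : ℝ² → M₂(ℝ)` is transverse to the rank-one stratum `S₁` (whose tangent space at a rank-one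
matrix is the kernel of the differential of `det`) iff `0` is a regular value of `det ∘ df`. -/
theorem stmt4 (f : (Fin 2 → ℝ) → (Fin 2 → ℝ)) (hf : ContDiff ℝ (⊤ : ℕ∞) f)
    (J : (Fin 2 → ℝ) → (Fin 2 → Fin 2 → ℝ))
    (hJ : ∀ x i j, J x i j = fderiv ℝ f x (Pi.single j 1) i)
    (hrank : ∀ x, 1 ≤ (Matrix.of (J x)).rank) :
    (∀ x, (Matrix.of (J x)).det = 0 →
        LinearMap.range (fderiv ℝ J x : (Fin 2 → ℝ) →ₗ[ℝ] (Fin 2 → Fin 2 → ℝ)) ⊔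
          LinearMap.ker (fderiv ℝ (fun M : Fin 2 → Fin 2 → ℝ => (Matrix.of M).det) (J x) :
            (Fin 2 → Fin 2 → ℝ) →ₗ[ℝ] ℝ) = ⊤)
      ↔ (∀ x, (Matrix.of (J x)).det = 0 →
          fderiv ℝ (fun y => (Matrix.of (J y)).det) x ≠ 0) := by
  have hdf : Differentiable ℝ (fderiv ℝ f) :=
    (hf.fderiv_right (m := (⊤ : ℕ∞)) (by exact_mod_cast le_top)).differentiable (by simp)
  have hJd : Differentiable ℝ J := by
    have hJ_eq : J = fun x i j => fderiv ℝ f x (Pi.single j 1) i :=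
      funext fun x => funext₂ (hJ x)
    rw [hJ_eq]
    fun_prop
  have hJ0 (x) : J x ≠ 0 := fun h => by simpa [h] using hrank x
  refine forall_congr' fun x => imp_congr_right fun _ => ?_
  have hchain : HasFDerivAt (fun y => (Matrix.of (J y)).det) _ x :=
    (hasFDerivAt_det_fin_two (J x)).comp x (hJd x).hasFDerivAt
  rw [(hasFDerivAt_det_fin_two (J x)).fderiv, hchain.fderiv,
    LinearMap.range_sup_ker_eq_top_iff_comp_ne_zero _
      (by exact_mod_cast detFinTwoDeriv_ne_zero (hJ0 x)),
    ← toLinearMap_comp, Ne, ← toLinearMap_zero, coe_inj]
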